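/- For any n ≥ 0 and any a ∈ F, there exists a nonzero operator P = Σ_{0≤i≤n} p_i·d_x^i ∈ F[d_x, d_y] of order n in d_x (with p_n ≠ 0) such that P·(d_y + a) = (d_y + a)·P. -/

import Mathlib

/-!
Pick `u ≠ 0` with `d_y u = -a u`. Then `u ∘ d_y ∘ u⁻¹ = d_y + a`, so conjugating by `u` carries
the commuting pair `d_x^n, d_y` to the commuting pair `P := u ∘ d_x^n ∘ u⁻¹, d_y + a`. By the
Leibniz rule `P` is an ordinary operator in `d_x` of order `n` with leading coefficient
`u · u⁻¹ = 1`.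
-/

open scoped BigOperators

/-- The ring of linear partial differential operators `F[d_x, d_y]` over a differential
field `F` with two commuting derivations `dx`, `dy`.  `D` is the (noncommutative) operator
ring, `ι : F →+* D` the inclusion of coefficients, `X`, `Y` the operators `d_x`, `d_y`,
subject to `X * f = f * X + dx f`, `Y * f = f * Y + dy f`, `X * Y = Y * X`.
`coeff` records the (unique) coefficients of an operator in the normal form
`P = ∑ coeff P (i,j) • X^i * Y^j`. -/
structure DiffOp (F : Type*) [Field F] (D : Type*) [Ring D] where
  dx : F → F
  dy : F → F
  dx_add : ∀ a b : F, dx (a + b) = dx a + dx b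
  dx_mul : ∀ a b : F, dx (a * b) = dx a * b + a * dx b
  dy_add : ∀ a b : F, dy (a + b) = dy a + dy b
  dy_mul : ∀ a b : F, dy (a * b) = dy a * b + a * dy b
  dx_dy_comm : ∀ a : F, dx (dy a) = dy (dx a)
  ι : F →+* D
  X : D
  Y : D
  X_Y_comm : X * Y = Y * X
  X_mul_ι : ∀ f : F, X * ι f = ι f * X + ι (dx f)
  Y_mul_ι : ∀ f : F, Y * ι f = ι f * Y + ι (dy f)
  coeff : D → (ℕ × ℕ) →₀ F
  repr : ∀ P : D, P = (coeff P).sum fun ij a => ι a * X ^ ij.1 * Y ^ ij.2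
  coeff_add : ∀ P Q : D, coeff (P + Q) = coeff P + coeff Q
  coeff_smul : ∀ (a : F) (P : D), coeff (ι a * P) = a • coeff P

namespace DiffOp

variable {F : Type*} [Field F] {D : Type*} [Ring D]

/-- The order of a differential operator: `max { i + j : p_{ij} ≠ 0 }`. -/
noncomputable def ord (S : DiffOp F D) (P : D) : ℕ :=
  (S.coeff P).support.sup fun ij => ij.1 + ij.2

/-- The symbol of a differential operator: the top-order homogeneous part,
as a (commutative) polynomial in the two variables `v = X 0`, `w = X 1`. -/
noncomputable def symb (S : DiffOp F D) (P : D) : MvPolynomial (Fin 2) F :=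
  ∑ ij ∈ (S.coeff P).support.filter (fun ij => ij.1 + ij.2 = S.ord P),
    MvPolynomial.monomial (Finsupp.single 0 ij.1 + Finsupp.single 1 ij.2) (S.coeff P ij)

/-- The subring `F[d_y] ⊆ F[d_x, d_y]`. -/
def Fdy (S : DiffOp F D) : Subring D := Subring.closure (Set.range S.ι ∪ {S.Y})

/-- The Hilbert–Kolchin dimension count of a left ideal `I` in filtration degree `z`:
`dim_F {operators of order ≤ z} − dim_F (I ∩ {order ≤ z})`, computed via coefficients. -/
noncomputable def hkDim (S : DiffOp F D) (I : Submodule D D) (z : ℕ) : ℤ :=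
  (Module.finrank F ↥(Finsupp.supported F F {ij : ℕ × ℕ | ij.1 + ij.2 ≤ z}) : ℤ) -
    (Module.finrank F ↥(Submodule.span F
      (S.coeff '' {P : D | P ∈ I ∧ ∀ ij ∈ (S.coeff P).support, ij.1 + ij.2 ≤ z})) : ℤ)

end DiffOp

theorem Commute.of_semiconjBy_units {M : Type*} [Monoid M] (v : Mˣ) {x y x' y' : M}
    (hx : SemiconjBy (v : M) x x') (hy : SemiconjBy (v : M) y y') (h : Commute x y) :
    Commute x' y' := by
  have hxy := (hx.mul_right hy).eq
  have hyx := (hy.mul_right hx).eq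
  rw [h.eq] at hxy
  exact v.mul_left_inj.mp (hxy.symm.trans hyx)

namespace DiffOp

variable {F : Type*} [Field F] {D : Type*} [Ring D] (S : DiffOp F D)

theorem commute_X_pow_Y (n : ℕ) : Commute (S.X ^ n) S.Y :=
  Commute.pow_left S.X_Y_comm n

theorem exists_X_pow_mul_ι (n : ℕ) (f : F) :
    ∃ p : Fin (n + 1) → F, p (Fin.last n) = f ∧
      S.X ^ n * S.ι f = ∑ i : Fin (n + 1), S.ι (p i) * S.X ^ (i : ℕ) := by
  induction n with
  | zero => exact ⟨fun _ => f, rfl, by simp⟩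
  | succ n ih =>
    obtain ⟨p, hp_last, hp⟩ := ih
    refine ⟨Fin.cons 0 p + Fin.snoc (fun i => S.dx (p i)) 0, ?_, ?_⟩
    · rw [Pi.add_apply, Fin.snoc_last, add_zero, ← Fin.succ_last, Fin.cons_succ, hp_last]
    · have h_cons : ∑ j : Fin (n + 2),
          S.ι ((Fin.cons 0 p : Fin (n + 2) → F) j) * S.X ^ (j : ℕ) =
          ∑ i : Fin (n + 1), S.ι (p i) * S.X ^ ((i : ℕ) + 1) := by
        simp [Fin.sum_univ_succ]
      have h_snoc : ∑ j : Fin (n + 2),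
          S.ι ((Fin.snoc (fun i => S.dx (p i)) 0 : Fin (n + 2) → F) j) * S.X ^ (j : ℕ) =
          ∑ i : Fin (n + 1), S.ι (S.dx (p i)) * S.X ^ (i : ℕ) := by
        simp [Fin.sum_univ_castSucc]
      have hX_mul (i : Fin (n + 1)) : S.X * (S.ι (p i) * S.X ^ (i : ℕ)) =
          S.ι (p i) * S.X ^ ((i : ℕ) + 1) + S.ι (S.dx (p i)) * S.X ^ (i : ℕ) := by
        rw [← mul_assoc, S.X_mul_ι, add_mul, mul_assoc, ← pow_succ']
      simp only [Pi.add_apply, map_add, add_mul, Finset.sum_add_distrib]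
      rw [h_cons, h_snoc, pow_succ', mul_assoc, hp, Finset.mul_sum, ← Finset.sum_add_distrib]
      exact Finset.sum_congr rfl fun i _ => hX_mul i

theorem semiconjBy_ι_Y {u a : F} (hu : S.dy u = -a * u) :
    SemiconjBy (S.ι u) S.Y (S.Y + S.ι a) := by
  rw [SemiconjBy, add_mul, S.Y_mul_ι, add_assoc, ← map_mul, ← map_add, hu, neg_mul,
    neg_add_cancel, map_zero, add_zero]

end DiffOp

theorem statement5_general {F : Type*} [Field F] {D : Type*} [Ring D]
    (S : DiffOp F D)
    (hDC : ∀ a : F, ∃ u : F, u ≠ 0 ∧ S.dy u = a * u)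
    (n : ℕ) (a : F) :
    ∃ p : Fin (n + 1) → F, p (Fin.last n) ≠ 0 ∧
      (∑ i : Fin (n + 1), S.ι (p i) * S.X ^ (i : ℕ)) * (S.Y + S.ι a)
        = (S.Y + S.ι a) * ∑ i : Fin (n + 1), S.ι (p i) * S.X ^ (i : ℕ) := by
  obtain ⟨u, hu0, hu⟩ := hDC (-a)
  obtain ⟨p, hp_last, hp⟩ := S.exists_X_pow_mul_ι n u⁻¹
  refine ⟨fun i => u * p i, by simp [hp_last, hu0], ?_⟩
  let v : Dˣ := Units.map S.ι.toMonoidHom (Units.mk0 u hu0)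
  have hP : ∑ i : Fin (n + 1), S.ι (u * p i) * S.X ^ (i : ℕ) = v * S.X ^ n * ↑v⁻¹ := by
    simp [v, mul_assoc, hp, Finset.mul_sum]
  rw [hP]
  exact Commute.of_semiconjBy_units v (v.mk_semiconjBy _) (S.semiconjBy_ι_Y hu)
    (S.commute_X_pow_Y n)

/-- over a differentially closed field (here we use the consequence of
differential closedness that every `a ∈ F` is a logarithmic `d_y`-derivative `d_y(u)/u`),
for every `n` and every `a ∈ F` there is an operator `P = ∑_{i ≤ n} p_i d_x^i` with
`p_n ≠ 0` commuting with `d_y + a`. -/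
theorem statement5 {F : Type*} [Field F] [CharZero F] {D : Type*} [Ring D] [Nontrivial D]
    (S : DiffOp F D)
    (hDC : ∀ a : F, ∃ u : F, u ≠ 0 ∧ S.dy u = a * u)
    (n : ℕ) (a : F) :
    ∃ p : Fin (n + 1) → F, p (Fin.last n) ≠ 0 ∧
      (∑ i : Fin (n + 1), S.ι (p i) * S.X ^ (i : ℕ)) * (S.Y + S.ι a)
        = (S.Y + S.ι a) * ∑ i : Fin (n + 1), S.ι (p i) * S.X ^ (i : ℕ) :=
  statement5_general S hDC n a
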